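/- Let ω = exp(2πi/3) and let f be the Hessian arrangement of 12 lines in ℂ³: the forms g₁ = x₁, g₂ = x₂, g₃ = x₃ together with h(i,j) = x₁ + ω^i x₂ + ω^j x₃ for (i,j) ∈ ZMod 3 × ZMod 3. Let S be the set of λ (in the 12-dimensional coordinate space of the arrangement) satisfying: the sum of all 12 coordinates of λ is 0, and for every c ∈ ZMod 3: λ(g₁) + Σ_{(i,j) : j−i = c} λ(h(i,j)) = 0, λ(g₂) + Σ_{(i,j) : j = c} λ(h(i,j)) = 0, and λ(g₃) + Σ_{(i,j) : i = c} λ(h(i,j)) = 0 (these are the equations associated to the nine multiplicity-4 flats of the arrangement). Then S is a ℂ-linear subspace of dimension 3 and S ⊆ R1_1(f). (In particular the first cohomology support locus of the Orlik–Solomon algebra of the Hessian arrangement has a non-local component of dimension three.) -/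

import Mathlib

/-!
The twelve lines fall into four classes of three, the coordinate lines `G` and the classes
`T_a = {h(i,j) | i + j = a}`, and any two lines from different classes meet in one of the nine
quadruple points, which lies on exactly one line of each class: the arrangement carries a 4-net.
For `v_a = ω(T_a) - ω(G)` the product `v_a ∧ v_b` therefore regroups, point by point, into a sum
of Orlik–Solomon relations of quadruple points, so the span of `v_0, v_1, v_2` is isotropic: it
lies in `K(λ)` for each of its members `λ`, whence `dim K(λ) ≥ 3`. The same net property shows
that the `v_a` satisfy the flat equations, and solving those equations shows they span all
solutions.
-/

noncomputable section

open Module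

/-- Degree-2 part of the Orlik–Solomon ideal (span over pairwise distinct triples
with linearly dependent forms; this agrees with the span over ordered triples
`i < j < k` since the spanning element is alternating in `(i,j,k)`). -/
def osI2 {I : Type*} [DecidableEq I] {ℓ : ℕ}
    (f : I → ((Fin ℓ → ℂ) →ₗ[ℂ] ℂ)) :
    Submodule ℂ (ExteriorAlgebra ℂ (I → ℂ)) :=
  Submodule.span ℂ
    { x | ∃ i j k : I, i ≠ j ∧ i ≠ k ∧ j ≠ k ∧
        ¬ LinearIndependent ℂ ![f i, f j, f k] ∧
        x = ExteriorAlgebra.ι ℂ (Pi.single j 1 : I → ℂ) *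
              ExteriorAlgebra.ι ℂ (Pi.single k 1 : I → ℂ)
          - ExteriorAlgebra.ι ℂ (Pi.single i 1 : I → ℂ) *
              ExteriorAlgebra.ι ℂ (Pi.single k 1 : I → ℂ)
          + ExteriorAlgebra.ι ℂ (Pi.single i 1 : I → ℂ) *
              ExteriorAlgebra.ι ℂ (Pi.single j 1 : I → ℂ) }

/-- `K(λ) = {η | ω(λ) ∧ ω(η) ∈ I₂(f)}`. -/
def osK {I : Type*} [DecidableEq I] {ℓ : ℕ}
    (f : I → ((Fin ℓ → ℂ) →ₗ[ℂ] ℂ)) (lam : I → ℂ) :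
    Submodule ℂ (I → ℂ) :=
  (osI2 f).comap
    ((LinearMap.mulLeft ℂ (ExteriorAlgebra.ι ℂ lam)).comp (ExteriorAlgebra.ι ℂ))

/-- The `k`-th cohomology support locus of the Orlik–Solomon algebra of `f`. -/
def osR1 {I : Type*} [Fintype I] [DecidableEq I] {ℓ : ℕ}
    (f : I → ((Fin ℓ → ℂ) →ₗ[ℂ] ℂ)) (k : ℕ) : Set (I → ℂ) :=
  { lam | letI := Classical.dec (lam = 0);
      k ≤ finrank ℂ (osK f lam) - (if lam = 0 then 0 else 1) }

namespace ExteriorAlgebra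

variable (R : Type*) {M : Type*} [CommRing R] [AddCommGroup M] [Module R M]

def osRelation (x y z : M) : ExteriorAlgebra R M :=
  ι R y * ι R z - ι R x * ι R z + ι R x * ι R y

variable {R}

theorem sum_sum_ι_mul_ι_of_bijective {α β γ : Type*} [Fintype α] [Fintype β] [Fintype γ]
    (p : α → M) (r : γ → M) (c : α → β → γ) (hc : ∀ x, Function.Bijective (c x)) :
    ∑ x, ∑ y, ι R (p x) * ι R (r (c x y)) = ι R (∑ x, p x) * ι R (∑ z, r z) := by
  rw [map_sum, map_sum, Finset.sum_mul_sum]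
  exact Finset.sum_congr rfl fun x _ => (hc x).sum_comp fun z => ι R (p x) * ι R (r z)

theorem ι_sub_mul_ι_sub_eq_neg_sum_osRelation {α β γ : Type*} [Fintype α] [Fintype β]
    [Fintype γ] (p : α → M) (q : β → M) (r : γ → M) (c : α → β → γ)
    (hc₁ : ∀ x, Function.Bijective (c x)) (hc₂ : ∀ y, Function.Bijective (c · y)) :
    ι R (∑ x, p x - ∑ y, q y) * ι R (∑ z, r z - ∑ y, q y) =
      -∑ x, ∑ y, osRelation R (p x) (q y) (r (c x y)) := by
  have hpr := sum_sum_ι_mul_ι_of_bijective (R := R) p r c hc₁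
  have hqr := sum_sum_ι_mul_ι_of_bijective (R := R) q r (fun y x => c x y) hc₂
  have hpq : ∑ x, ∑ y, ι R (p x) * ι R (q y) = ι R (∑ x, p x) * ι R (∑ y, q y) := by
    rw [map_sum, map_sum, Finset.sum_mul_sum]
  rw [Finset.sum_comm] at hqr
  simp only [osRelation, Finset.sum_add_distrib, Finset.sum_sub_distrib, hpr, hqr, hpq, map_sub,
    sub_mul, mul_sub, ι_sq_zero]
  abel

end ExteriorAlgebra

open ExteriorAlgebra

section OrlikSolomon

variable {I : Type*} [DecidableEq I] {ℓ : ℕ} (f : I → ((Fin ℓ → ℂ) →ₗ[ℂ] ℂ))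

theorem osRelation_mem_osI2 {i j k : I} (hij : i ≠ j) (hik : i ≠ k) (hjk : j ≠ k)
    (hdep : ¬ LinearIndependent ℂ ![f i, f j, f k]) :
    osRelation ℂ (Pi.single i 1 : I → ℂ) (Pi.single j 1) (Pi.single k 1) ∈ osI2 f :=
  Submodule.subset_span ⟨i, j, k, hij, hik, hjk, hdep, rfl⟩

/-- `p`, `q`, `r` enumerate three classes of lines, and the Latin square `c` says that the lines
`p x` and `q y` meet in a point lying on exactly one line `r (c x y)` of the third class. -/
theorem ι_sub_mul_ι_sub_mem_osI2 {α β γ : Type*} [Fintype α] [Fintype β] [Fintype γ]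
    (p : α → I) (q : β → I) (r : γ → I) (c : α → β → γ)
    (hc₁ : ∀ x, Function.Bijective (c x)) (hc₂ : ∀ y, Function.Bijective (c · y))
    (hpq : ∀ x y, p x ≠ q y) (hpr : ∀ x y, p x ≠ r (c x y)) (hqr : ∀ x y, q y ≠ r (c x y))
    (hdep : ∀ x y, ¬ LinearIndependent ℂ ![f (p x), f (q y), f (r (c x y))]) :
    ι ℂ (∑ x, (Pi.single (p x) 1 : I → ℂ) - ∑ y, Pi.single (q y) 1) *
      ι ℂ (∑ z, (Pi.single (r z) 1 : I → ℂ) - ∑ y, Pi.single (q y) 1) ∈ osI2 f := by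
  rw [ι_sub_mul_ι_sub_eq_neg_sum_osRelation _ _ _ c hc₁ hc₂]
  exact neg_mem <| Submodule.sum_mem _ fun x _ => Submodule.sum_mem _ fun y _ =>
    osRelation_mem_osI2 f (hpq x y) (hpr x y) (hqr x y) (hdep x y)

theorem span_le_osK {s : Set (I → ℂ)} (hs : ∀ x ∈ s, ∀ y ∈ s, ι ℂ x * ι ℂ y ∈ osI2 f)
    {lam : I → ℂ} (hlam : lam ∈ Submodule.span ℂ s) : Submodule.span ℂ s ≤ osK f lam := by
  intro η hη
  have hmem := Submodule.apply_mem_map₂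
    ((LinearMap.mul ℂ (ExteriorAlgebra ℂ (I → ℂ))).compl₁₂ (ι ℂ) (ι ℂ)) hlam hη
  rw [Submodule.map₂_span_span] at hmem
  change ι ℂ lam * ι ℂ η ∈ osI2 f
  refine Submodule.span_le.mpr ?_ hmem
  rintro _ ⟨x, hx, y, hy, rfl⟩
  exact hs x hx y hy

theorem mem_osR1_of_le_osK [Fintype I] {W : Submodule ℂ (I → ℂ)} {lam : I → ℂ} {k : ℕ}
    (hW : W ≤ osK f lam) (hk : k < finrank ℂ W) : lam ∈ osR1 f k := by
  have := Submodule.finrank_mono hW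
  simp only [osR1, Set.mem_ofPred_eq]
  split_ifs <;> omega

end OrlikSolomon

section PlaneForms

variable {K : Type*} [Field K]

theorem not_linearIndependent_of_smul_add_smul_add_smul {V : Type*} [AddCommGroup V]
    [Module K V] {u v w : V} {a b c : K} (h : a • u + b • v + c • w = 0) (ha : a ≠ 0) :
    ¬ LinearIndependent K ![u, v, w] :=
  Fintype.not_linearIndependent_iff.mpr ⟨![a, b, c], by simpa [Fin.sum_univ_three] using h, 0, ha⟩

def planeForm (x y : K) : (Fin 3 → K) →ₗ[K] K :=
  LinearMap.proj 0 + x • LinearMap.proj 1 + y • LinearMap.proj 2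

theorem planeForm_proj_zero_dependent {x y x' y' : K} (h : x * y' = x' * y) (hx' : x' ≠ 0) :
    ¬ LinearIndependent K ![planeForm x y, LinearMap.proj 0, planeForm x' y'] := by
  refine not_linearIndependent_of_smul_add_smul_add_smul (a := x') (b := x - x') (c := -x) ?_ hx'
  refine LinearMap.ext fun v => ?_
  simp only [planeForm, LinearMap.add_apply, LinearMap.smul_apply, LinearMap.proj_apply,
    LinearMap.zero_apply, smul_eq_mul]
  linear_combination -v 2 * h

theorem planeForm_proj_one_dependent (x x' y : K) :
    ¬ LinearIndependent K ![planeForm x y, LinearMap.proj 1, planeForm x' y] := by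
  refine not_linearIndependent_of_smul_add_smul_add_smul (a := 1) (b := x' - x) (c := -1) ?_
    one_ne_zero
  refine LinearMap.ext fun v => ?_
  simp only [planeForm, LinearMap.add_apply, LinearMap.smul_apply, LinearMap.proj_apply,
    LinearMap.zero_apply, smul_eq_mul]
  ring

theorem planeForm_proj_two_dependent (x y y' : K) :
    ¬ LinearIndependent K ![planeForm x y, LinearMap.proj 2, planeForm x y'] := by
  refine not_linearIndependent_of_smul_add_smul_add_smul (a := 1) (b := y' - y) (c := -1) ?_
    one_ne_zero
  refine LinearMap.ext fun v => ?_
  simp only [planeForm, LinearMap.add_apply, LinearMap.smul_apply, LinearMap.proj_apply,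
    LinearMap.zero_apply, smul_eq_mul]
  ring

end PlaneForms

theorem Fintype.sum_ite_eq_sum_of_bijective {ι A D M : Type*} [Fintype ι] [Fintype A]
    [Fintype D] [DecidableEq D] [AddCommMonoid M] (φ : ι → D) (ψ : ι → A)
    (h : Function.Bijective fun i => (φ i, ψ i)) (g : A → M) (d : D) :
    ∑ i, (if φ i = d then g (ψ i) else 0) = ∑ a, g a := by
  rw [Fintype.sum_bijective _ h _ (fun q => if q.1 = d then g q.2 else 0) fun _ => rfl,
    Fintype.sum_prod_type]
  simp

theorem sum_zmod_three {M : Type*} [AddCommMonoid M] (g : ZMod 3 → M) :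
    ∑ x, g x = g 0 + g 1 + g 2 :=
  Fin.sum_univ_three g

theorem zmod_three_cases : ∀ i : ZMod 3, i = 0 ∨ i = 1 ∨ i = 2 := by
  decide

section Hessian

abbrev HessianIndex := Fin 3 ⊕ ZMod 3 × ZMod 3

variable {ω : ℂ} {f : HessianIndex → ((Fin 3 → ℂ) →ₗ[ℂ] ℂ)}

theorem pow_val_mul_pow_val_eq (h3 : ω ^ 3 = 1) {x y x' y' : ZMod 3} (h : x + y = x' + y') :
    ω ^ x.val * ω ^ y.val = ω ^ x'.val * ω ^ y'.val := by
  rw [← pow_add, ← pow_add, pow_eq_pow_mod _ h3, pow_eq_pow_mod (x'.val + y'.val) h3,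
    ← ZMod.val_add, ← ZMod.val_add, h]

/-- The line `t + hessianShift k * (b - a)` of the class `i + j = b` passes through the point where
the line `t` of the class `i + j = a` meets the coordinate line `x_{k+1} = 0`. -/
def hessianShift : Fin 3 → ZMod 3 := ![-1, 1, 0]

theorem hessianShift_bijective {a b : ZMod 3} (hab : a ≠ b) (t : ZMod 3) :
    Function.Bijective fun k => t + hessianShift k * (b - a) := by
  revert a b t
  decide

theorem hessian_not_linearIndependent
    (hfcoord : ∀ i : Fin 3, f (Sum.inl i) = (LinearMap.proj i : (Fin 3 → ℂ) →ₗ[ℂ] ℂ))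
    (hfh : ∀ i j : ZMod 3, f (Sum.inr (i, j)) = planeForm (ω ^ i.val) (ω ^ j.val))
    (h3 : ω ^ 3 = 1) (a b t : ZMod 3) (k : Fin 3) :
    ¬ LinearIndependent ℂ ![f (Sum.inr (t, a - t)), f (Sum.inl k),
      f (Sum.inr (t + hessianShift k * (b - a), b - (t + hessianShift k * (b - a))))] := by
  rw [hfh, hfcoord, hfh]
  fin_cases k <;> simp only [hessianShift, Fin.zero_eta, Fin.mk_one, Fin.reduceFinMk,
    Matrix.cons_val_zero, Matrix.cons_val_one, Matrix.cons_val_two, Matrix.head_cons,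
    Matrix.tail_cons]
  · refine planeForm_proj_zero_dependent (pow_val_mul_pow_val_eq h3 ?_)
      (pow_ne_zero _ (by rintro rfl; norm_num at h3))
    have h30 : (3 : ZMod 3) = 0 := rfl
    linear_combination (b - a) * h30
  · rw [show b - (t + 1 * (b - a)) = a - t by ring]
    exact planeForm_proj_one_dependent _ _ _
  · simp only [zero_mul, add_zero]
    exact planeForm_proj_two_dependent _ _ _

/-- `ω(T_a) - ω(G)`, where `T_a` is the class of the lines `h(i,j)` with `i + j = a` and `G` the
class of the coordinate lines. -/
def hessianV (a : ZMod 3) : HessianIndex → ℂ :=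
  ∑ t, Pi.single (Sum.inr (t, a - t)) 1 - ∑ k, Pi.single (Sum.inl k) 1

theorem hessianV_mul_mem_osI2
    (hfcoord : ∀ i : Fin 3, f (Sum.inl i) = (LinearMap.proj i : (Fin 3 → ℂ) →ₗ[ℂ] ℂ))
    (hfh : ∀ i j : ZMod 3, f (Sum.inr (i, j)) = planeForm (ω ^ i.val) (ω ^ j.val))
    (h3 : ω ^ 3 = 1) (a b : ZMod 3) :
    ι ℂ (hessianV a) * ι ℂ (hessianV b) ∈ osI2 f := by
  rcases eq_or_ne a b with rfl | hab
  · rw [ι_sq_zero]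
    exact zero_mem _
  refine ι_sub_mul_ι_sub_mem_osI2 f (fun t => Sum.inr (t, a - t)) Sum.inl
    (fun s => Sum.inr (s, b - s)) (fun t k => t + hessianShift k * (b - a))
    (hessianShift_bijective hab) (fun k => (Equiv.addRight _).bijective)
    (fun _ _ => Sum.inr_ne_inl) ?_ (fun _ _ => Sum.inl_ne_inr)
    (hessian_not_linearIndependent hfcoord hfh h3 a b)
  intro t k h
  simp only [Sum.inr.injEq, Prod.mk.injEq] at h
  exact hab (by linear_combination h.2 + h.1)

theorem hessianV_apply_inl (a : ZMod 3) (k : Fin 3) : hessianV a (Sum.inl k) = -1 := by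
  simp [hessianV, Finset.sum_apply, Pi.single_apply]

theorem hessianV_apply_inr (a : ZMod 3) (p : ZMod 3 × ZMod 3) :
    hessianV a (Sum.inr p) = if p.1 + p.2 = a then 1 else 0 := by
  obtain ⟨i, j⟩ := p
  have hT : ∑ t, (Pi.single (Sum.inr (t, a - t)) 1 : HessianIndex → ℂ) (Sum.inr (i, j)) =
      if i + j = a then 1 else 0 := by
    rw [Fintype.sum_eq_single i fun t ht => Pi.single_eq_of_ne (by simp [Ne.symm ht]) _]
    simp [Pi.single_apply, eq_sub_iff_add_eq']
  simp [hessianV, Finset.sum_apply, hT]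

theorem sum_smul_hessianV_apply_inl (c : ZMod 3 → ℂ) (k : Fin 3) :
    (∑ b, c b • hessianV b) (Sum.inl k) = -∑ b, c b := by
  simp [Finset.sum_apply, hessianV_apply_inl]

theorem sum_smul_hessianV_apply_inr (c : ZMod 3 → ℂ) (p : ZMod 3 × ZMod 3) :
    (∑ b, c b • hessianV b) (Sum.inr p) = c (p.1 + p.2) := by
  simp [Finset.sum_apply, hessianV_apply_inr]

def hessianFlatSet : Set (Fin 3 ⊕ ZMod 3 × ZMod 3 → ℂ) := { lam |
      (∑ u : Fin 3 ⊕ ZMod 3 × ZMod 3, lam u) = 0 ∧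
      ∀ c : ZMod 3,
        lam (Sum.inl 0) +
          (∑ p : ZMod 3 × ZMod 3, if p.2 - p.1 = c then lam (Sum.inr p) else 0) = 0 ∧
        lam (Sum.inl 1) +
          (∑ p : ZMod 3 × ZMod 3, if p.2 = c then lam (Sum.inr p) else 0) = 0 ∧
        lam (Sum.inl 2) +
          (∑ p : ZMod 3 × ZMod 3, if p.1 = c then lam (Sum.inr p) else 0) = 0 }

theorem sum_smul_hessianV_mem (c : ZMod 3 → ℂ) : ∑ b, c b • hessianV b ∈ hessianFlatSet := by
  have hflat (φ : ZMod 3 × ZMod 3 → ZMod 3) (hφ : Function.Bijective fun p => (φ p, p.1 + p.2))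
      (d : ZMod 3) :
      ∑ p, (if φ p = d then (∑ b, c b • hessianV b) (Sum.inr p) else 0) = ∑ b, c b := by
    simp only [sum_smul_hessianV_apply_inr]
    exact Fintype.sum_ite_eq_sum_of_bijective φ (fun p => p.1 + p.2) hφ c d
  have htotal : ∑ p : ZMod 3 × ZMod 3, c (p.1 + p.2) = 3 * ∑ b, c b := by
    have hrow (i : ZMod 3) : ∑ j, c (i + j) = ∑ b, c b := Equiv.sum_comp (Equiv.addLeft i) c
    simp [Fintype.sum_prod_type, hrow]
  refine ⟨?_, fun d => ⟨?_, ?_, ?_⟩⟩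
  · simp only [Fintype.sum_sum_type, sum_smul_hessianV_apply_inl, sum_smul_hessianV_apply_inr,
      htotal]
    simp
  · rw [hflat (fun p => p.2 - p.1) (by decide), sum_smul_hessianV_apply_inl, neg_add_cancel]
  · rw [hflat (fun p => p.2) (by decide), sum_smul_hessianV_apply_inl, neg_add_cancel]
  · rw [hflat (fun p => p.1) (by decide), sum_smul_hessianV_apply_inl, neg_add_cancel]

theorem eq_sum_smul_hessianV_of_mem {lam : HessianIndex → ℂ} (hlam : lam ∈ hessianFlatSet) :
    ∑ b, lam (Sum.inr (0, b)) • hessianV b = lam := by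
  obtain ⟨-, hflat⟩ := hlam
  obtain ⟨hA0, hB0, hC0⟩ := hflat 0
  obtain ⟨hA1, hB1, hC1⟩ := hflat 1
  obtain ⟨hA2, hB2, hC2⟩ := hflat 2
  simp +decide only [Fintype.sum_prod_type, sum_zmod_three, if_true, if_false, add_zero,
    zero_add] at hA0 hB0 hC0 hA1 hB1 hC1 hA2 hB2 hC2
  funext u
  rcases u with k | ⟨i, j⟩
  · rw [sum_smul_hessianV_apply_inl, sum_zmod_three]
    -- each family of three flats covers every `h(i,j)` once, so all `λ(g_k)` agree
    fin_cases k <;> simp only [Fin.zero_eta, Fin.mk_one, Fin.reduceFinMk]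
    · linear_combination -hC0 - (hA0 + hA1 + hA2 - hC0 - hC1 - hC2) / 3
    · linear_combination -hC0 - (hB0 + hB1 + hB2 - hC0 - hC1 - hC2) / 3
    · linear_combination -hC0
  · have h10 : lam (Sum.inr (0, 1)) = lam (Sum.inr (1, 0)) := by
      linear_combination (hC0 - hB0 + hA1 + hB1 - hC1 - hA2) / 3
    have h11 : lam (Sum.inr (0, 2)) = lam (Sum.inr (1, 1)) := by
      linear_combination (hC0 - hA0 - hB1 - hC1 + hA2 + hB2) / 3
    have h12 : lam (Sum.inr (0, 0)) = lam (Sum.inr (1, 2)) := by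
      linear_combination (hA0 + hB0 + hC0 - hA1 - hC1 - hB2) / 3
    have h20 : lam (Sum.inr (0, 2)) = lam (Sum.inr (2, 0)) := by
      linear_combination (hC0 - hB0 - hA1 + hA2 + hB2 - hC2) / 3
    have h21 : lam (Sum.inr (0, 0)) = lam (Sum.inr (2, 1)) := by
      linear_combination (hA0 + hB0 + hC0 - hB1 - hA2 - hC2) / 3
    have h22 : lam (Sum.inr (0, 1)) = lam (Sum.inr (2, 2)) := by
      linear_combination (hC0 - hA0 + hA1 + hB1 - hB2 - hC2) / 3
    rw [sum_smul_hessianV_apply_inr]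
    -- `i + j` is evaluated in `ZMod 3` by unification
    obtain rfl | rfl | rfl := zmod_three_cases i <;> obtain rfl | rfl | rfl := zmod_three_cases j <;>
      first | rfl | assumption

theorem hessianFlatSet_eq_span : hessianFlatSet = Submodule.span ℂ (Set.range hessianV) := by
  ext lam
  rw [SetLike.mem_coe, Submodule.mem_span_range_iff_exists_fun]
  exact ⟨fun h => ⟨_, eq_sum_smul_hessianV_of_mem h⟩, fun ⟨c, hc⟩ => hc ▸ sum_smul_hessianV_mem c⟩

theorem linearIndependent_hessianV : LinearIndependent ℂ hessianV := by
  refine Fintype.linearIndependent_iff.mpr fun c hc a => ?_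
  simpa only [sum_smul_hessianV_apply_inr, zero_add, Pi.zero_apply] using
    congrFun hc (Sum.inr (0, a))

end Hessian

/-- The Hessian arrangement of 12 lines in `ℂ³` has a three-dimensional non-local
component in the first cohomology support locus of its Orlik–Solomon algebra.
The index set is `Fin 3 ⊕ (ZMod 3 × ZMod 3)`: `Sum.inl i` corresponds to the
coordinate form `g_{i+1} = x_{i+1}` and `Sum.inr (i,j)` to
`h(i,j) = x₁ + ω^i x₂ + ω^j x₃`. -/
theorem hessian_nonlocal_component
    (ω : ℂ) (hω : ω = Complex.exp (2 * Real.pi * Complex.I / 3))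
    (f : (Fin 3 ⊕ ZMod 3 × ZMod 3) → ((Fin 3 → ℂ) →ₗ[ℂ] ℂ))
    (hfcoord : ∀ i : Fin 3,
      f (Sum.inl i) = (LinearMap.proj i : (Fin 3 → ℂ) →ₗ[ℂ] ℂ))
    (hfh : ∀ i j : ZMod 3,
      f (Sum.inr (i, j)) = (LinearMap.proj 0 : (Fin 3 → ℂ) →ₗ[ℂ] ℂ) +
        ω ^ i.val • LinearMap.proj 1 + ω ^ j.val • LinearMap.proj 2)
    (S : Set (Fin 3 ⊕ ZMod 3 × ZMod 3 → ℂ))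
    (hS : S = { lam |
      (∑ u : Fin 3 ⊕ ZMod 3 × ZMod 3, lam u) = 0 ∧
      ∀ c : ZMod 3,
        lam (Sum.inl 0) +
          (∑ p : ZMod 3 × ZMod 3, if p.2 - p.1 = c then lam (Sum.inr p) else 0) = 0 ∧
        lam (Sum.inl 1) +
          (∑ p : ZMod 3 × ZMod 3, if p.2 = c then lam (Sum.inr p) else 0) = 0 ∧
        lam (Sum.inl 2) +
          (∑ p : ZMod 3 × ZMod 3, if p.1 = c then lam (Sum.inr p) else 0) = 0 }) :
    (∃ W : Submodule ℂ (Fin 3 ⊕ ZMod 3 × ZMod 3 → ℂ),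
      (W : Set (Fin 3 ⊕ ZMod 3 × ZMod 3 → ℂ)) = S ∧ finrank ℂ W = 3) ∧
    S ⊆ osR1 f 1 := by
  have h3 : ω ^ 3 = 1 := by
    simpa [hω] using (Complex.isPrimitiveRoot_exp 3 three_ne_zero).pow_eq_one
  have hrank : finrank ℂ (Submodule.span ℂ (Set.range hessianV)) = 3 := by
    rw [finrank_span_eq_card linearIndependent_hessianV, ZMod.card]
  have hSW : S = Submodule.span ℂ (Set.range hessianV) := hS.trans hessianFlatSet_eq_span
  refine ⟨⟨_, hSW.symm, hrank⟩, fun lam hlam => ?_⟩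
  rw [hSW] at hlam
  refine mem_osR1_of_le_osK f (span_le_osK f ?_ hlam) (by rw [hrank]; norm_num)
  rintro _ ⟨a, rfl⟩ _ ⟨b, rfl⟩
  exact hessianV_mul_mem_osI2 hfcoord hfh h3 a b
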